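/- For any nonempty compact set A ⊆ ℝ^d, the upper outer box dimension of A is at most the upper outer Minkowski dimension of A, and the lower outer box dimension is at most the lower outer Minkowski dimension. -/

import Mathlib

open Metric MeasureTheory Filter Set Topology
open scoped ENNReal

noncomputable section

/-- `uniqueNearest A y x` : `x` is the unique nearest point of `y` in `A`. -/
def uniqueNearest {d : ℕ} (A : Set (EuclideanSpace ℝ (Fin d)))
    (y x : EuclideanSpace ℝ (Fin d)) : Prop :=
  x ∈ A ∧ dist y x = Metric.infDist y A ∧ ∀ a ∈ A, dist y a = Metric.infDist y A → a = x

/-- The local reach `δ(A,x,u)`. -/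
def localReach {d : ℕ} (A : Set (EuclideanSpace ℝ (Fin d)))
    (x u : EuclideanSpace ℝ (Fin d)) : ℝ≥0∞ :=
  ⨆ (s : ℝ) (_ : 0 ≤ s ∧ uniqueNearest A (x + s • u) x), ENNReal.ofReal s

/-- `M_t(A)`. -/
def reachSet {d : ℕ} (A : Set (EuclideanSpace ℝ (Fin d))) (t : ℝ) :
    Set (EuclideanSpace ℝ (Fin d)) :=
  {x | x ∈ frontier A ∧ ∃ u : EuclideanSpace ℝ (Fin d), ‖u‖ = 1 ∧
    ENNReal.ofReal t < localReach A x u}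

/-- `Θ_t`: minimal number of open sets of diameter at most `t` needed to cover `S`. -/
def coverNum {d : ℕ} (S : Set (EuclideanSpace ℝ (Fin d))) (t : ℝ) : ℕ :=
  sInf {n | ∃ 𝒰 : Finset (Set (EuclideanSpace ℝ (Fin d))), 𝒰.card = n ∧
    (∀ U ∈ 𝒰, IsOpen U ∧ Metric.diam U ≤ t) ∧ S ⊆ ⋃₀ ↑𝒰}

/-- Upper outer Minkowski dimension. -/
def dimOutMinkUpper {d : ℕ} (A : Set (EuclideanSpace ℝ (Fin d))) : ℝ :=
  sInf {q : ℝ | 0 ≤ q ∧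
    Filter.limsup (fun ε : ℝ =>
      ENNReal.ofReal (ε ^ (q - (d : ℝ))) * volume (Metric.cthickening ε A \ A))
      (𝓝[>] 0) = 0}

/-- Lower outer Minkowski dimension. -/
def dimOutMinkLower {d : ℕ} (A : Set (EuclideanSpace ℝ (Fin d))) : ℝ :=
  sInf {q : ℝ | 0 ≤ q ∧
    Filter.liminf (fun ε : ℝ =>
      ENNReal.ofReal (ε ^ (q - (d : ℝ))) * volume (Metric.cthickening ε A \ A))
      (𝓝[>] 0) = 0}

/-!
Every point `x` of `M_t(A)` is touched by an open ball of radius `s > t` missing `A`; inside it,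
the ball of radius `t/2` tangent at `x` has a centre `z` with
`dist z a ^ 2 ≥ dist x a ^ 2 / 2 + t ^ 2 / 4` for all `a ∈ A`. For a maximal `t/4`-separated set
`X ⊆ M_t(A)` the balls `B(x, t/2)`, `x ∈ X`, cover `M_t(A)`, while the balls `B(z, t/100)` are
pairwise disjoint and lie in `A_t \ A`. Hence `Θ_t(A) · c t^d ≤ vol(A_t \ A)`, so
`t^(q-d) vol(A_t \ A) < 1` forces `Θ_t(A) ≤ C t^(-q)`, that is,
`log Θ_t(A) / (-log t) ≤ q + o(1)`.
-/

section TangentBall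

variable {E : Type*} [NormedAddCommGroup E] [InnerProductSpace ℝ E]

theorem dist_add_smul_sq {x u a : E} (hu : ‖u‖ = 1) (c : ℝ) :
    dist (x + c • u) a ^ 2 = dist x a ^ 2 + 2 * c * inner ℝ (x - a) u + c ^ 2 := by
  rw [dist_eq_norm, dist_eq_norm, show x + c • u - a = (x - a) + c • u by abel,
    norm_add_sq_real, inner_smul_right, norm_smul, hu, mul_one, Real.norm_eq_abs, sq_abs]
  ring

/-- `x + r • u` is the centre of the ball of radius `r` internally tangent at `x` to the ball of
radius `s` centred at `x + s • u`; `a` lies outside the latter. -/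
theorem sq_dist_add_smul_ge_of_le_dist {x u a : E} {r s : ℝ} (hu : ‖u‖ = 1) (hr : 0 ≤ r)
    (hrs : r ≤ s) (ha : s ≤ dist (x + s • u) a) :
    (1 - r / s) * dist x a ^ 2 + r ^ 2 ≤ dist (x + r • u) a ^ 2 := by
  rcases (hr.trans hrs).eq_or_lt with rfl | hs
  · obtain rfl : r = 0 := le_antisymm hrs hr
    simp
  have hsq : s ^ 2 ≤ dist (x + s • u) a ^ 2 := pow_le_pow_left₀ hs.le ha 2
  rw [dist_add_smul_sq hu] at hsq
  rw [dist_add_smul_sq hu]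
  have hmul := mul_le_mul_of_nonneg_left
    (by linarith : 0 ≤ dist x a ^ 2 + 2 * s * inner ℝ (x - a) u) (div_nonneg hr hs.le)
  field_simp at hmul ⊢
  nlinarith

end TangentBall

section ReachSet

variable {d : ℕ} {A : Set (EuclideanSpace ℝ (Fin d))} {t : ℝ} {x : EuclideanSpace ℝ (Fin d)}

theorem exists_outer_ball_of_mem_reachSet (ht : 0 ≤ t) (hx : x ∈ reachSet A t) :
    x ∈ A ∧ ∃ u : EuclideanSpace ℝ (Fin d), ‖u‖ = 1 ∧ ∃ s, t < s ∧
      ∀ a ∈ A, s ≤ dist (x + s • u) a := by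
  obtain ⟨-, u, hu, hlt⟩ := hx
  rw [localReach] at hlt
  obtain ⟨s, hlt⟩ := lt_iSup_iff.mp hlt
  obtain ⟨⟨hs, hxA, hdist, -⟩, hts⟩ := lt_iSup_iff.mp hlt
  have hself : dist (x + s • u) x = s := by
    rw [dist_eq_norm, add_sub_cancel_left, norm_smul, hu, mul_one, Real.norm_of_nonneg hs]
  refine ⟨hxA, u, hu, s, (ENNReal.ofReal_lt_ofReal_iff_of_nonneg ht).mp hts, fun a ha => ?_⟩
  calc s = infDist (x + s • u) A := hself.symm.trans hdist
    _ ≤ dist (x + s • u) a := infDist_le_dist_of_mem ha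

theorem reachSet_subset (ht : 0 ≤ t) : reachSet A t ⊆ A :=
  fun _ hx => (exists_outer_ball_of_mem_reachSet ht hx).1

theorem exists_center_of_mem_reachSet (ht : 0 < t) (hx : x ∈ reachSet A t) :
    ∃ z, dist z x = t / 2 ∧ ∀ a ∈ A, dist x a ^ 2 / 2 + t ^ 2 / 4 ≤ dist z a ^ 2 := by
  obtain ⟨-, u, hu, s, hts, hs⟩ := exists_outer_ball_of_mem_reachSet ht.le hx
  refine ⟨x + (t / 2) • u, ?_, fun a ha => ?_⟩
  · rw [dist_eq_norm, add_sub_cancel_left, norm_smul, hu, mul_one,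
      Real.norm_of_nonneg (by positivity)]
  · have key := sq_dist_add_smul_ge_of_le_dist (r := t / 2) hu (by positivity) (by linarith)
      (hs a ha)
    have hhalf : 1 / 2 ≤ 1 - t / 2 / s := by
      rw [div_div, le_sub_comm, div_le_iff₀ (by linarith)]
      linarith
    nlinarith [sq_nonneg (dist x a)]

end ReachSet

theorem TotallyBounded.exists_finite_isSeparated_isCover {X : Type*} [PseudoEMetricSpace X]
    {s : Set X} (hs : TotallyBounded s) {ε : NNReal} (hε : ε ≠ 0) :
    ∃ N ⊆ s, N.Finite ∧ IsSeparated ε N ∧ IsCover ε s N := by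
  obtain ⟨C, -, hCfin, hC⟩ := exists_finite_isCover_of_totallyBounded (ε := ε / 2)
    (by simpa using hε) hs
  have hpack : packingNumber ε s ≠ ⊤ := by
    refine ne_top_of_le_ne_top hCfin.encard_lt_top.ne ?_
    calc packingNumber ε s = packingNumber (2 * (ε / 2)) s := by
          rw [mul_div_cancel₀ _ two_ne_zero]
      _ ≤ externalCoveringNumber (ε / 2) s := packingNumber_two_mul_le_externalCoveringNumber _ _
      _ ≤ C.encard := hC.externalCoveringNumber_le_encard
  refine ⟨maximalSeparatedSet ε s, maximalSeparatedSet_subset, ?_,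
    isSeparated_maximalSeparatedSet, isCover_maximalSeparatedSet hpack⟩
  exact Set.encard_ne_top_iff.mp (by rwa [encard_maximalSeparatedSet hpack])

section Counting

variable {d : ℕ} {A : Set (EuclideanSpace ℝ (Fin d))} {t : ℝ}

theorem coverNum_le_card_of_subset_biUnion_ball {S : Set (EuclideanSpace ℝ (Fin d))}
    (ht : 0 ≤ t) (X : Finset (EuclideanSpace ℝ (Fin d)))
    (hS : S ⊆ ⋃ x ∈ X, ball x (t / 2)) :
    coverNum S t ≤ X.card := by
  classical
  unfold coverNum
  refine le_trans (Nat.sInf_le ?_) (Finset.card_image_le (f := (ball · (t / 2))))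
  refine ⟨_, rfl, ?_, ?_⟩
  · simp only [Finset.mem_image]
    rintro _ ⟨x, -, rfl⟩
    exact ⟨isOpen_ball, (diam_ball (by linarith)).trans_eq (by ring)⟩
  · simpa [Finset.coe_image, sUnion_image] using hS

theorem card_mul_volume_ball_le (ht : 0 < t) {X : Finset (EuclideanSpace ℝ (Fin d))}
    (hXM : ↑X ⊆ reachSet A t)
    (hX : (X : Set (EuclideanSpace ℝ (Fin d))).Pairwise fun x y => t / 4 < dist x y) :
    (X.card : ℝ≥0∞) * volume (ball (0 : EuclideanSpace ℝ (Fin d)) (t / 100)) ≤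
      volume (cthickening t A \ A) := by
  choose! z hzx hz using fun x (hx : x ∈ reachSet A t) => exists_center_of_mem_reachSet ht hx
  have hXA : ∀ x ∈ X, x ∈ A := fun x hx => reachSet_subset ht.le (hXM hx)
  have hsub : ∀ x ∈ X, ball (z x) (t / 100) ⊆ cthickening t A \ A := by
    intro x hx q hq
    rw [mem_ball] at hq
    refine ⟨closedBall_subset_cthickening (hXA x hx) t ?_, fun hqA => ?_⟩
    · rw [mem_closedBall]
      linarith [dist_triangle q (z x) x, hzx x (hXM hx), dist_comm q (z x)]
    · nlinarith [hz x (hXM hx) q hqA, sq_nonneg (dist x q), dist_nonneg (x := q) (y := z x),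
        dist_comm q (z x)]
  -- `(t / 2 + t / 50) ^ 2 ≤ (t / 4) ^ 2 / 2 + t ^ 2 / 4`, so distinct centres are `t / 50` apart.
  have hdisj : (X : Set (EuclideanSpace ℝ (Fin d))).PairwiseDisjoint
      fun x => ball (z x) (t / 100) := by
    intro x hx y hy hxy
    refine ball_disjoint_ball ?_
    have h1 := hz x (hXM hx) y (hXA y hy)
    have h2 := hX hx hy hxy
    nlinarith [dist_triangle (z x) (z y) y, hzx y (hXM hy), dist_nonneg (x := z x) (y := y)]
  calc (X.card : ℝ≥0∞) * volume (ball (0 : EuclideanSpace ℝ (Fin d)) (t / 100))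
      = ∑ x ∈ X, volume (ball (z x) (t / 100)) := by simp [Measure.addHaar_ball_center]
    _ = volume (⋃ x ∈ X, ball (z x) (t / 100)) :=
      (measure_biUnion_finset hdisj fun _ _ => measurableSet_ball).symm
    _ ≤ volume (cthickening t A \ A) := measure_mono (iUnion₂_subset hsub)

theorem coverNum_reachSet_mul_volume_ball_le (hA : IsCompact A) (ht : 0 < t) :
    (coverNum (reachSet A t) t : ℝ≥0∞) *
        volume (ball (0 : EuclideanSpace ℝ (Fin d)) (t / 100)) ≤
      volume (cthickening t A \ A) := by
  obtain ⟨N, hNM, hNfin, hNsep, hNcov⟩ :=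
    (hA.totallyBounded.subset (reachSet_subset ht.le)).exists_finite_isSeparated_isCover
      (ε := (t / 4).toNNReal) (by simpa using ht)
  have hcover : coverNum (reachSet A t) t ≤ hNfin.toFinset.card := by
    refine coverNum_le_card_of_subset_biUnion_ball ht.le _
      (hNcov.subset_iUnion_closedBall.trans ?_)
    simp only [Real.coe_toNNReal _ (by positivity : 0 ≤ t / 4), Finite.mem_toFinset]
    exact iUnion₂_mono fun x _ => closedBall_subset_ball (by linarith)
  have hsep : (hNfin.toFinset : Set (EuclideanSpace ℝ (Fin d))).Pairwise
      fun x y => t / 4 < dist x y := by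
    rw [Finite.coe_toFinset]
    refine hNsep.mono' fun x y hxy => ?_
    rw [edist_dist] at hxy
    exact (ENNReal.ofReal_lt_ofReal_iff_of_nonneg (by positivity)).mp hxy
  calc _ ≤ (hNfin.toFinset.card : ℝ≥0∞) *
        volume (ball (0 : EuclideanSpace ℝ (Fin d)) (t / 100)) := by gcongr
    _ ≤ _ := card_mul_volume_ball_le ht (by simpa using hNM) hsep

end Counting

theorem exists_coverNum_reachSet_le_mul_rpow (d : ℕ) :
    ∃ C : ℝ, 1 ≤ C ∧ ∀ {A : Set (EuclideanSpace ℝ (Fin d))}, IsCompact A →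
      ∀ {q t : ℝ}, 0 < t →
      ENNReal.ofReal (t ^ (q - d)) * volume (cthickening t A \ A) < 1 →
      (coverNum (reachSet A t) t : ℝ) ≤ C * t ^ (-q) := by
  set ω := (volume (ball (0 : EuclideanSpace ℝ (Fin d)) (1 / 100))).toReal
  have hω : 0 < ω :=
    ENNReal.toReal_pos (measure_ball_pos _ _ (by norm_num)).ne' measure_ball_lt_top.ne
  refine ⟨max ω⁻¹ 1, le_max_right _ _, fun {A} hA q t ht hsmall => ?_⟩
  set N := coverNum (reachSet A t) t
  have hball : volume (ball (0 : EuclideanSpace ℝ (Fin d)) (t / 100)) =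
      ENNReal.ofReal (t ^ d * ω) := by
    rw [div_eq_mul_one_div t, Measure.addHaar_ball_mul_of_pos _ _ ht, finrank_euclideanSpace_fin,
      ENNReal.ofReal_mul (by positivity), ENNReal.ofReal_toReal measure_ball_lt_top.ne]
  have hreal : N * (ω * t ^ q) < 1 := by
    have : ENNReal.ofReal (t ^ (q - d)) *
        (N * volume (ball (0 : EuclideanSpace ℝ (Fin d)) (t / 100))) < 1 :=
      lt_of_le_of_lt (by gcongr; exact coverNum_reachSet_mul_volume_ball_le hA ht) hsmall
    rw [hball, ← ENNReal.ofReal_natCast, ← ENNReal.ofReal_mul (by positivity),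
      ← ENNReal.ofReal_mul (by positivity), ENNReal.ofReal_lt_one, Real.rpow_sub ht,
      Real.rpow_natCast] at this
    convert this using 1
    field_simp
  calc (N : ℝ) ≤ ω⁻¹ * t ^ (-q) := by
        rw [Real.rpow_neg ht.le, ← mul_inv, ← one_div, le_div_iff₀ (by positivity)]
        exact hreal.le
    _ ≤ max ω⁻¹ 1 * t ^ (-q) := by gcongr; exact le_max_left _ _

section BoxCountingExponent

theorem log_div_neg_log_le_of_le_mul_rpow {n : ℕ} {C q t : ℝ} (hC : 1 ≤ C) (hq : 0 ≤ q)
    (ht₀ : 0 < t) (ht₁ : t < 1) (hn : (n : ℝ) ≤ C * t ^ (-q)) :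
    Real.log n / -Real.log t ≤ q + Real.log C / -Real.log t := by
  have hlog : 0 < -Real.log t := neg_pos.mpr (Real.log_neg ht₀ ht₁)
  rcases n.eq_zero_or_pos with rfl | hn₀
  · simp only [Nat.cast_zero, Real.log_zero, zero_div]
    have := Real.log_nonneg hC
    positivity
  rw [add_div' _ _ _ hlog.ne', div_le_div_iff_of_pos_right hlog]
  calc Real.log n ≤ Real.log (C * t ^ (-q)) := Real.log_le_log (by positivity) hn
    _ = q * -Real.log t + Real.log C := by
      rw [Real.log_mul (by positivity) (by positivity), Real.log_rpow ht₀]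
      ring

theorem eventually_log_div_neg_log_le_add {C q δ : ℝ} (hC : 1 ≤ C) (hq : 0 ≤ q)
    (hδ : 0 < δ) :
    ∀ᶠ t in 𝓝[>] (0 : ℝ), ∀ n : ℕ, (n : ℝ) ≤ C * t ^ (-q) →
      Real.log n / -Real.log t ≤ q + δ := by
  have hlim : Tendsto (fun t => Real.log C / -Real.log t) (𝓝[>] 0) (𝓝 0) :=
    tendsto_const_nhds.div_atTop (tendsto_neg_atBot_atTop.comp Real.tendsto_log_nhdsGT_zero)
  filter_upwards [Ioo_mem_nhdsGT one_pos, hlim.eventually (eventually_le_nhds hδ)]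
    with t ht hsmall n hn
  linarith [log_div_neg_log_le_of_le_mul_rpow hC hq ht.1 ht.2 hn]

theorem isBoundedUnder_ge_log_div_neg_log (N : ℝ → ℕ) :
    IsBoundedUnder (· ≥ ·) (𝓝[>] (0 : ℝ)) fun t => Real.log (N t) / -Real.log t :=
  isBoundedUnder_of_eventually_ge <| eventually_of_mem (Ioo_mem_nhdsGT one_pos) fun _ ht =>
    div_nonneg (Real.log_natCast_nonneg _) (neg_nonneg.mpr (Real.log_nonpos ht.1.le ht.2.le))

theorem limsup_log_div_neg_log_le {N : ℝ → ℕ} {C q : ℝ} (hC : 1 ≤ C) (hq : 0 ≤ q)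
    (hN : ∀ᶠ t in 𝓝[>] (0 : ℝ), (N t : ℝ) ≤ C * t ^ (-q)) :
    limsup (fun t => Real.log (N t) / -Real.log t) (𝓝[>] 0) ≤ q :=
  le_of_forall_pos_le_add fun _ hδ =>
    limsup_le_of_le (isBoundedUnder_ge_log_div_neg_log N).isCoboundedUnder_le <|
      (hN.and (eventually_log_div_neg_log_le_add hC hq hδ)).mono fun _ h => h.2 _ h.1

theorem liminf_log_div_neg_log_le {N : ℝ → ℕ} {C q : ℝ} (hC : 1 ≤ C) (hq : 0 ≤ q)
    (hN : ∃ᶠ t in 𝓝[>] (0 : ℝ), (N t : ℝ) ≤ C * t ^ (-q)) :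
    liminf (fun t => Real.log (N t) / -Real.log t) (𝓝[>] 0) ≤ q :=
  le_of_forall_pos_le_add fun _ hδ =>
    liminf_le_of_frequently_le
      ((hN.and_eventually (eventually_log_div_neg_log_le_add hC hq hδ)).mono fun _ h => h.2 _ h.1)
      (isBoundedUnder_ge_log_div_neg_log N)

end BoxCountingExponent

theorem tendsto_rpow_mul_volume_cthickening_diff {d : ℕ} {A : Set (EuclideanSpace ℝ (Fin d))}
    (hA : IsCompact A) {q : ℝ} (hq : (d : ℝ) < q) :
    Tendsto (fun ε : ℝ => ENNReal.ofReal (ε ^ (q - d)) * volume (cthickening ε A \ A))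
      (𝓝[>] 0) (𝓝 0) := by
  have hpow : Tendsto (fun ε : ℝ => ENNReal.ofReal (ε ^ (q - d))) (𝓝[>] 0) (𝓝 0) := by
    simpa using ENNReal.tendsto_ofReal
      ((tendsto_id.mono_left nhdsWithin_le_nhds).rpow_const_nhds_zero (sub_pos.mpr hq))
  have hbound : Tendsto (fun ε : ℝ => ENNReal.ofReal (ε ^ (q - d)) * volume (cthickening 1 A))
      (𝓝[>] 0) (𝓝 0) := by
    simpa using ENNReal.Tendsto.mul_const hpow (.inr hA.cthickening.measure_lt_top.ne)
  refine tendsto_of_tendsto_of_tendsto_of_le_of_le' tendsto_const_nhds hbound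
    (.of_forall fun _ => zero_le) ?_
  filter_upwards [Ioo_mem_nhdsGT one_pos] with ε hε
  gcongr
  exact sdiff_subset.trans (cthickening_mono hε.2.le A)

theorem outer_box_le_outer_Minkowski (d : ℕ) (A : Set (EuclideanSpace ℝ (Fin d)))
    (hA : IsCompact A) :
    Filter.limsup (fun t : ℝ =>
        Real.log (coverNum (reachSet A t) t) / (-Real.log t)) (𝓝[>] 0) ≤
      dimOutMinkUpper A ∧
    Filter.liminf (fun t : ℝ =>
        Real.log (coverNum (reachSet A t) t) / (-Real.log t)) (𝓝[>] 0) ≤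
      dimOutMinkLower A := by
  obtain ⟨C, hC, hcover⟩ := exists_coverNum_reachSet_le_mul_rpow d
  have hvol := tendsto_rpow_mul_volume_cthickening_diff hA (lt_add_one (d : ℝ))
  have hd : (0 : ℝ) ≤ d + 1 := by positivity
  constructor
  · refine le_csInf ⟨d + 1, hd, hvol.limsup_eq⟩ fun q ⟨hq, hlim⟩ => ?_
    refine limsup_log_div_neg_log_le hC hq ?_
    filter_upwards [eventually_lt_of_limsup_lt (hlim.trans_lt one_pos), self_mem_nhdsWithin]
      with t hsmall ht
    exact hcover hA ht hsmall
  · refine le_csInf ⟨d + 1, hd, hvol.liminf_eq⟩ fun q ⟨hq, hlim⟩ => ?_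
    refine liminf_log_div_neg_log_le hC hq ?_
    refine ((frequently_lt_of_liminf_lt (h := hlim.trans_lt one_pos)).and_eventually
      self_mem_nhdsWithin).mono fun t ⟨hsmall, ht⟩ => hcover hA ht hsmall
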